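/- arXiv:2404.12953 — 4 statements merged into one kernel-verified Lean document; each statement's English description precedes it below -/
import Mathlib

section
/- Let Δ be a positive integer, let c ≥ 0 and n ≥ 0 be real numbers, and let s_1 ≤ s_2 ≤ … ≤ s_Δ be nonnegative real numbers (nondecreasing) with Σ_{i=1}^{Δ} s_i = n. Then Σ_{i=1}^{Δ} (Δ + i)·c·√(s_i) ≥ 2Δ·c·√n. Moreover, this lower bound is attained by the assignment s_1 = … = s_{Δ−1} = 0 and s_Δ = n, for which the sum equals 2Δ·c·√n; hence the expression Σ_{i=1}^{Δ} (Δ + i)·c·√(s_i), over nondecreasing nonnegative tuples summing to n, is minimized when s_Δ = n. -/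
/-- For a positive integer Δ, reals c ≥ 0 and n ≥ 0, and a
nondecreasing tuple of nonnegative reals s_1 ≤ … ≤ s_Δ with Σ s_i = n,
we have Σ_{i=1}^{Δ} (Δ + i)·c·√(s_i) ≥ 2Δ·c·√n; moreover the assignment
s_1 = … = s_{Δ−1} = 0, s_Δ = n attains this bound exactly. -/
theorem stmt_1 (Δ : ℕ) (hΔ : 0 < Δ) (c n : ℝ) (hc : 0 ≤ c) (hn : 0 ≤ n)
    (s : ℕ → ℝ) (hs : ∀ i ∈ Finset.Icc 1 Δ, 0 ≤ s i)
    (hmono : ∀ i j, 1 ≤ i → i ≤ j → j ≤ Δ → s i ≤ s j)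
    (hsum : ∑ i ∈ Finset.Icc 1 Δ, s i = n) :
    (2 * (Δ : ℝ) * c * Real.sqrt n
        ≤ ∑ i ∈ Finset.Icc 1 Δ, ((Δ : ℝ) + (i : ℝ)) * c * Real.sqrt (s i))
    ∧ (∑ i ∈ Finset.Icc 1 Δ, ((Δ : ℝ) + (i : ℝ)) * c
          * Real.sqrt (if i = Δ then n else 0)
        = 2 * (Δ : ℝ) * c * Real.sqrt n) := by
  have hΔmem : Δ ∈ Finset.Icc 1 Δ := Finset.mem_Icc.mpr ⟨hΔ, le_rfl⟩
  constructor
  · rcases eq_or_lt_of_le hn with h0 | hpos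
    · rw [← h0, Real.sqrt_zero, mul_zero]
      apply Finset.sum_nonneg
      intro i hi
      have hi1 := (Finset.mem_Icc.mp hi).1
      have : (0:ℝ) ≤ (Δ : ℝ) + (i : ℝ) := by positivity
      have := Real.sqrt_nonneg (s i)
      positivity
    · set t := s Δ with ht
      have htpos : 0 < t := by
        by_contra h
        push_neg at h
        have hz : ∀ i ∈ Finset.Icc 1 Δ, s i = 0 := by
          intro i hi
          have hi' := Finset.mem_Icc.mp hi
          have h1 := hmono i Δ hi'.1 hi'.2 le_rfl
          have h2 := hs i hi
          linarith
        have : n = 0 := by rw [← hsum]; exact Finset.sum_eq_zero hz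
        linarith
      have hstpos : 0 < Real.sqrt t := Real.sqrt_pos.mpr htpos
      have hstep1 : ∀ i ∈ Finset.Icc 1 Δ, s i / Real.sqrt t ≤ Real.sqrt (s i) := by
        intro i hi
        have hsi := hs i hi
        have hi' := Finset.mem_Icc.mp hi
        have hle : s i ≤ t := hmono i Δ hi'.1 hi'.2 le_rfl
        rw [div_le_iff₀ hstpos]
        calc s i = Real.sqrt (s i) * Real.sqrt (s i) := (Real.mul_self_sqrt hsi).symm
          _ ≤ Real.sqrt (s i) * Real.sqrt t :=
            mul_le_mul_of_nonneg_left (Real.sqrt_le_sqrt hle) (Real.sqrt_nonneg _)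
      have hsumsqrt : n / Real.sqrt t ≤ ∑ i ∈ Finset.Icc 1 Δ, Real.sqrt (s i) := by
        rw [← hsum, Finset.sum_div]
        exact Finset.sum_le_sum hstep1
      -- pointwise bound with extra weight at Δ
      have h1 : ∑ i ∈ Finset.Icc 1 Δ,
          ((Δ:ℝ) * c * Real.sqrt (s i) + (if i = Δ then (Δ:ℝ) * c * Real.sqrt t else 0))
          ≤ ∑ i ∈ Finset.Icc 1 Δ, ((Δ : ℝ) + (i : ℝ)) * c * Real.sqrt (s i) := by
        apply Finset.sum_le_sum
        intro i hi
        have hi' := Finset.mem_Icc.mp hi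
        have hsi := hs i hi
        by_cases hiΔ : i = Δ
        · apply le_of_eq
          rw [hiΔ, if_pos rfl, ht]
          ring
        · simp only [if_neg hiΔ, add_zero]
          have h1i : (1:ℝ) ≤ (i:ℝ) := by exact_mod_cast hi'.1
          have hnn := Real.sqrt_nonneg (s i)
          nlinarith [mul_nonneg (mul_nonneg (by linarith : (0:ℝ) ≤ (i:ℝ)) hc) hnn]
      rw [Finset.sum_add_distrib, Finset.sum_ite_eq' (Finset.Icc 1 Δ) Δ, if_pos hΔmem,
        ← Finset.mul_sum] at h1
      have hsn : Real.sqrt n * Real.sqrt n = n := Real.mul_self_sqrt hn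
      have hst : Real.sqrt t * Real.sqrt t = t := Real.mul_self_sqrt htpos.le
      have hAMGM : 2 * Real.sqrt n ≤ n / Real.sqrt t + Real.sqrt t := by
        rw [← sub_nonneg]
        have key : n / Real.sqrt t + Real.sqrt t - 2 * Real.sqrt n
            = (Real.sqrt n - Real.sqrt t)^2 / Real.sqrt t := by
          field_simp
          nlinarith [hsn, hst]
        rw [key]
        positivity
      calc 2 * (Δ : ℝ) * c * Real.sqrt n
          = (Δ:ℝ) * c * (2 * Real.sqrt n) := by ring
        _ ≤ (Δ:ℝ) * c * (n / Real.sqrt t + Real.sqrt t) := by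
            apply mul_le_mul_of_nonneg_left hAMGM
            positivity
        _ ≤ (Δ:ℝ) * c * (∑ i ∈ Finset.Icc 1 Δ, Real.sqrt (s i) + Real.sqrt t) := by
            apply mul_le_mul_of_nonneg_left _ (by positivity)
            linarith
        _ = (Δ:ℝ) * c * ∑ i ∈ Finset.Icc 1 Δ, Real.sqrt (s i)
            + (Δ:ℝ) * c * Real.sqrt t := by ring
        _ ≤ _ := h1
  · rw [Finset.sum_eq_single_of_mem Δ hΔmem (fun i _ hne => by simp [hne])]
    rw [if_pos rfl]
    ring
end

section
/- Let Δ be a positive integer, let c ≥ 1 be a real number, and let E : ℕ → ℝ satisfy: (i) E(0) ≤ 0; (ii) E(1) ≤ 8Δc − 2Δc − 2√2·c; and (iii) for every natural number n ≥ 1 there exists a nondecreasing tuple of natural numbers s_1 ≤ … ≤ s_Δ with Σ_{i=1}^{Δ} s_i = n such that E(n+1) ≤ Δ·c·√2 + Σ_{i=1}^{Δ} ( E(s_i) + (Δ − i)·c·√(s_i) ). Then for every natural number n ≥ 1, E(n) ≤ 8·Δ·c·n; in particular there exists a constant C > 0 (namely C = 8Δc) such that E(n) ≤ C·n for all n ≥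 1. -/
set_option maxHeartbeats 1000000 in
/-- Under the same hypotheses as Statement 2, for every n ≥ 1 we
have E(n) ≤ 8Δ·c·n; in particular there is a constant C > 0 (namely C = 8Δc)
with E(n) ≤ C·n for all n ≥ 1. -/
theorem stmt_3 (Δ : ℕ) (hΔ : 0 < Δ) (c : ℝ) (hc : 1 ≤ c) (E : ℕ → ℝ)
    (hE0 : E 0 ≤ 0)
    (hE1 : E 1 ≤ 8 * (Δ : ℝ) * c - 2 * (Δ : ℝ) * c - 2 * Real.sqrt 2 * c)
    (hrec : ∀ n : ℕ, 1 ≤ n → ∃ s : ℕ → ℕ,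
      (∀ i j, 1 ≤ i → i ≤ j → j ≤ Δ → s i ≤ s j) ∧
      (∑ i ∈ Finset.Icc 1 Δ, s i = n) ∧
      E (n + 1) ≤ (Δ : ℝ) * c * Real.sqrt 2
        + ∑ i ∈ Finset.Icc 1 Δ,
            (E (s i) + ((Δ : ℝ) - (i : ℝ)) * c * Real.sqrt (s i))) :
    (∀ n : ℕ, 1 ≤ n → E n ≤ 8 * (Δ : ℝ) * c * n)
    ∧ ∃ C : ℝ, 0 < C ∧ C = 8 * (Δ : ℝ) * c ∧
        ∀ n : ℕ, 1 ≤ n → E n ≤ C * n := by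
  have hc0 : (0:ℝ) < c := lt_of_lt_of_le one_pos hc
  have hΔ1 : (1:ℝ) ≤ (Δ:ℝ) := by exact_mod_cast hΔ
  have hs2nn : (0:ℝ) ≤ Real.sqrt 2 := Real.sqrt_nonneg 2
  have hs2 : Real.sqrt 2 ≤ 1.5 := by
    have : Real.sqrt 2 ≤ Real.sqrt (1.5^2) := Real.sqrt_le_sqrt (by norm_num)
    rwa [Real.sqrt_sq (by norm_num)] at this
  have key : ∀ n : ℕ, 1 ≤ n →
      E n ≤ 8*(Δ:ℝ)*c*n - 2*(Δ:ℝ)*c*Real.sqrt n - 2*Real.sqrt 2*c := by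
    intro N
    induction N using Nat.strong_induction_on with
    | _ N ih =>
      intro hN
      match N, hN, ih with
      | 1, _, _ => simpa using hE1
      | (m+2), _, ih =>
        set n := m + 1 with hn_def
        have hn1 : 1 ≤ n := Nat.le_add_left 1 m
        obtain ⟨s, hmono, hsum, hrec'⟩ := hrec n hn1
        have hΔmem : Δ ∈ Finset.Icc 1 Δ := Finset.mem_Icc.mpr ⟨hΔ, le_rfl⟩
        have hle : ∀ i ∈ Finset.Icc 1 Δ, s i ≤ s Δ := by
          intro i hi
          obtain ⟨h1, h2⟩ := Finset.mem_Icc.mp hi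
          exact hmono i Δ h1 h2 le_rfl
        -- s Δ ≥ 1
        have hsΔ : 1 ≤ s Δ := by
          by_contra h
          have h0 : s Δ = 0 := by omega
          have : ∑ i ∈ Finset.Icc 1 Δ, s i = 0 :=
            Finset.sum_eq_zero (fun i hi => by have := hle i hi; omega)
          omega
        set u := Real.sqrt (s Δ) with hu_def
        have hu : 0 < u := Real.sqrt_pos.mpr (by exact_mod_cast hsΔ)
        have hu2 : u^2 = (s Δ : ℝ) := Real.sq_sqrt (by positivity)
        -- per-term bound
        have hterm : ∀ i ∈ Finset.Icc 1 Δ,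
            E (s i) + ((Δ:ℝ) - (i:ℝ)) * c * Real.sqrt (s i)
              ≤ 8*(Δ:ℝ)*c*(s i) - ((Δ:ℝ)+(i:ℝ))*c*Real.sqrt (s i) := by
          intro i hi
          rcases Nat.eq_zero_or_pos (s i) with h0 | h1
          · simp only [h0, Nat.cast_zero, Real.sqrt_zero, mul_zero, add_zero,
              sub_zero]
            simpa using hE0
          · have hsile : s i ≤ n := by
              have := Finset.single_le_sum (f := s)
                (fun i _ => Nat.zero_le _) hi
              omega
            have hlt : s i < m + 2 := by omega
            have hih := ih (s i) hlt h1
            have hsq2c : 0 ≤ Real.sqrt 2 * c := mul_nonneg hs2nn hc0.le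
            nlinarith [hih, hsq2c]
        have hsum1 : E (n+1) ≤ (Δ:ℝ)*c*Real.sqrt 2
            + ∑ i ∈ Finset.Icc 1 Δ,
                (8*(Δ:ℝ)*c*(s i) - ((Δ:ℝ)+(i:ℝ))*c*Real.sqrt (s i)) :=
          le_trans hrec' (by
            gcongr with i hi
            exact hterm i hi)
        -- split the sum
        have hA : ∑ i ∈ Finset.Icc 1 Δ, (8*(Δ:ℝ)*c*(s i)) = 8*(Δ:ℝ)*c*n := by
          rw [← Finset.mul_sum]
          congr 1
          rw [← Nat.cast_sum, hsum]
        -- lower bound on the sqrt-sum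
        have hB1 : ∀ i ∈ Finset.Icc 1 Δ, ((s i : ℝ))/u ≤ Real.sqrt (s i) := by
          intro i hi
          rw [div_le_iff₀ hu]
          have h1 : Real.sqrt (s i) * Real.sqrt (s i) = (s i : ℝ) :=
            Real.mul_self_sqrt (by positivity)
          have h2 : Real.sqrt (s i) ≤ u :=
            Real.sqrt_le_sqrt (by exact_mod_cast hle i hi)
          nlinarith [Real.sqrt_nonneg ((s i : ℝ))]
        have hB2 : (n:ℝ)/u ≤ ∑ i ∈ Finset.Icc 1 Δ, Real.sqrt (s i) := by
          calc (n:ℝ)/u = ∑ i ∈ Finset.Icc 1 Δ, ((s i:ℝ)/u) := by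
                rw [← Finset.sum_div, ← Nat.cast_sum, hsum]
            _ ≤ _ := Finset.sum_le_sum hB1
        have hB3 : (Δ:ℝ)*u ≤ ∑ i ∈ Finset.Icc 1 Δ, (i:ℝ)*Real.sqrt (s i) := by
          have := Finset.single_le_sum
            (f := fun i : ℕ => (i:ℝ)*Real.sqrt (s i))
            (fun i _ => mul_nonneg (by positivity) (Real.sqrt_nonneg _)) hΔmem
          simpa using this
        have hAMGM : 2*Real.sqrt n ≤ u + (n:ℝ)/u := by
          have hsqn : (Real.sqrt n)^2 = (n:ℝ) := Real.sq_sqrt (by positivity)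
          have h2 : 2*Real.sqrt n * u ≤ u^2 + (n:ℝ) := by
            nlinarith [sq_nonneg (u - Real.sqrt n)]
          have heq : u + (n:ℝ)/u = (u^2 + (n:ℝ))/u := by field_simp
          rw [heq, le_div_iff₀ hu]
          linarith
        have hB : 2*(Δ:ℝ)*Real.sqrt n
            ≤ ∑ i ∈ Finset.Icc 1 Δ, (((Δ:ℝ)+(i:ℝ))*Real.sqrt (s i)) := by
          have hsplit : ∑ i ∈ Finset.Icc 1 Δ, (((Δ:ℝ)+(i:ℝ))*Real.sqrt (s i))
              = (Δ:ℝ) * ∑ i ∈ Finset.Icc 1 Δ, Real.sqrt (s i)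
                + ∑ i ∈ Finset.Icc 1 Δ, (i:ℝ)*Real.sqrt (s i) := by
            rw [Finset.mul_sum, ← Finset.sum_add_distrib]
            exact Finset.sum_congr rfl (fun i _ => by ring)
          rw [hsplit]
          have h1 : (Δ:ℝ) * ((n:ℝ)/u) ≤ (Δ:ℝ) * ∑ i ∈ Finset.Icc 1 Δ, Real.sqrt (s i) :=
            mul_le_mul_of_nonneg_left hB2 (by positivity)
          have h2 : (Δ:ℝ) * (u + (n:ℝ)/u) ≥ (Δ:ℝ) * (2*Real.sqrt n) :=
            mul_le_mul_of_nonneg_left hAMGM (by positivity)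
          nlinarith [hB3]
        -- combine
        have hmain : E (n+1) ≤ (Δ:ℝ)*c*Real.sqrt 2 + 8*(Δ:ℝ)*c*n
            - c * (2*(Δ:ℝ)*Real.sqrt n) := by
          have hsum2 : ∑ i ∈ Finset.Icc 1 Δ,
              (8*(Δ:ℝ)*c*(s i) - ((Δ:ℝ)+(i:ℝ))*c*Real.sqrt (s i))
              = 8*(Δ:ℝ)*c*n
                - c * ∑ i ∈ Finset.Icc 1 Δ, (((Δ:ℝ)+(i:ℝ))*Real.sqrt (s i)) := by
            rw [Finset.sum_sub_distrib, hA, Finset.mul_sum]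
            congr 1
            apply Finset.sum_congr rfl
            intro i _; ring
          rw [hsum2] at hsum1
          have := mul_le_mul_of_nonneg_left hB hc0.le
          linarith
        -- finish the induction step
        have hsqn1 : Real.sqrt ((n:ℝ)+1) ≤ Real.sqrt n + 1 := by
          have hstep : (n:ℝ)+1 ≤ (Real.sqrt n + 1)^2 := by
            nlinarith [Real.sq_sqrt (show (0:ℝ) ≤ n by positivity),
              Real.sqrt_nonneg (n:ℝ)]
          have := Real.sqrt_le_sqrt hstep
          rwa [Real.sqrt_sq (by positivity)] at this
        have hcast : ((m+2 : ℕ) : ℝ) = (n:ℝ) + 1 := by push_cast [hn_def]; ring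
        show E (n+1) ≤ 8*(Δ:ℝ)*c*((m+2:ℕ):ℝ) - 2*(Δ:ℝ)*c*Real.sqrt ((m+2:ℕ):ℝ)
            - 2*Real.sqrt 2*c
        rw [hcast]
        have hΔc : (1:ℝ) ≤ (Δ:ℝ)*c := by nlinarith
        nlinarith [hmain, hsqn1, Real.sqrt_nonneg (n:ℝ),
          mul_le_mul_of_nonneg_right hs2 (show (0:ℝ) ≤ (Δ:ℝ)*c by positivity),
          mul_le_mul_of_nonneg_right hs2 hc0.le,
          mul_le_mul_of_nonneg_left hΔc (show (0:ℝ) ≤ c by positivity),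
          mul_le_mul_of_nonneg_left hsqn1 (show (0:ℝ) ≤ 2*(Δ:ℝ)*c by positivity)]
  have main : ∀ n : ℕ, 1 ≤ n → E n ≤ 8 * (Δ : ℝ) * c * n := by
    intro n hn
    have h := key n hn
    have h1 : 0 ≤ 2*(Δ:ℝ)*c*Real.sqrt n := by positivity
    have h2 : 0 ≤ 2*Real.sqrt 2*c := by positivity
    linarith
  exact ⟨main, 8*(Δ:ℝ)*c, by positivity, rfl, main⟩
end

section
/- Let f : ℕ → ℤ × ℤ be a function such that for every natural number k, every i, and every r < 4^k, both |(f(i+r)).1 − (f(i)).1| ≤ 2·2^k and |(f(i+r)).2 − (f(i)).2| ≤ 2·2^k (i.e., every 4^k consecutive elements lie in a subgrid of side length at most 2·2^k). Then for all natural numbers i and j, the Manhattan distance |(f(i+j)).1 − (f(i)).1| + |(f(i+j)).2 − (f(i)).2| is at most 8·√j. -/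
/-- If f : ℕ → ℤ × ℤ is "aligned", i.e. for every k, i and r < 4^k
both coordinates of f(i+r) differ from those of f(i) by at most 2·2^k, then for
all i, j, the Manhattan distance between f(i+j) and f(i) is at most 8·√j. -/
theorem stmt_4 (f : ℕ → ℤ × ℤ)
    (haligned : ∀ k i r : ℕ, r < 4 ^ k →
      |(f (i + r)).1 - (f i).1| ≤ 2 * 2 ^ k ∧
      |(f (i + r)).2 - (f i).2| ≤ 2 * 2 ^ k) :
    ∀ i j : ℕ,
      ((|(f (i + j)).1 - (f i).1| + |(f (i + j)).2 - (f i).2| : ℤ) : ℝ)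
        ≤ 8 * Real.sqrt j := by
  intro i j
  rcases Nat.eq_zero_or_pos j with hj | hj
  · subst hj
    simp
  · set m := Nat.log 4 j with hm
    have hj4 : j < 4 ^ (m + 1) := Nat.lt_pow_succ_log_self (by norm_num) j
    have hle : 4 ^ m ≤ j := Nat.pow_log_le_self 4 hj.ne'
    obtain ⟨h1, h2⟩ := haligned (m + 1) i j hj4
    have hsum : (|(f (i + j)).1 - (f i).1| + |(f (i + j)).2 - (f i).2| : ℤ)
        ≤ 4 * 2 ^ (m + 1) := by linarith
    have hcast : ((|(f (i + j)).1 - (f i).1| + |(f (i + j)).2 - (f i).2| : ℤ) : ℝ)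
        ≤ ((4 * 2 ^ (m + 1) : ℤ) : ℝ) := by exact_mod_cast hsum
    refine hcast.trans ?_
    have hsq : ((2 : ℝ) ^ m) ≤ Real.sqrt j := by
      rw [show ((2 : ℝ) ^ m) = Real.sqrt ((2 ^ m) ^ 2) by
        rw [Real.sqrt_sq (by positivity)]]
      apply Real.sqrt_le_sqrt
      have : ((2 : ℝ) ^ m) ^ 2 = (4 : ℝ) ^ m := by
        rw [← pow_mul, pow_mul']; norm_num
      rw [this]
      exact_mod_cast hle
    push_cast
    ring_nf
    nlinarith [hsq]
end

section
/- For every natural number n ≥ 1 and every natural number Δ ≥ 1, letting m = ⌈log₂ √n⌉, the finite sum Σ_{i=0}^{m} 2·4^{m−i}·Δ·2^{i+1}·(2i+4) is at most 192·Δ·n. -/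
lemma stmt6_aux (Δ : ℕ) : ∀ m : ℕ,
    ∑ i ∈ Finset.range (m + 1), 2 * 4 ^ (m - i) * Δ * 2 ^ (i + 1) * (2 * i + 4)
      + 4 * Δ * 2 ^ m * (2 * m + 8) = 48 * Δ * 4 ^ m := by
  intro m
  induction m with
  | zero => simp; ring
  | succ m ih =>
    rw [Finset.sum_range_succ]
    have h1 : ∀ i ∈ Finset.range (m + 1),
        2 * 4 ^ (m + 1 - i) * Δ * 2 ^ (i + 1) * (2 * i + 4)
          = 4 * (2 * 4 ^ (m - i) * Δ * 2 ^ (i + 1) * (2 * i + 4)) := by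
      intro i hi
      rw [Finset.mem_range] at hi
      have h : m + 1 - i = (m - i) + 1 := by omega
      rw [h]; ring
    rw [Finset.sum_congr rfl h1, ← Finset.mul_sum]
    have h2 : m + 1 - (m + 1) = 0 := by omega
    rw [h2]
    apply @Nat.cast_injective ℤ
    have ih' := congrArg (Nat.cast : ℕ → ℤ) ih
    push_cast at ih' ⊢
    linear_combination (4 : ℤ) * ih'

/-- For n ≥ 1 and Δ ≥ 1, with m = ⌈log₂ √n⌉, the sum
Σ_{i=0}^{m} 2·4^{m−i}·Δ·2^{i+1}·(2i+4) is at most 192·Δ·n. -/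
theorem stmt_6 (n Δ : ℕ) (hn : 1 ≤ n) (hΔ : 1 ≤ Δ)
    (m : ℕ) (hm : (m : ℤ) = ⌈Real.logb 2 (Real.sqrt n)⌉) :
    ∑ i ∈ Finset.range (m + 1), 2 * 4 ^ (m - i) * Δ * 2 ^ (i + 1) * (2 * i + 4)
      ≤ 192 * Δ * n := by
  have h4 : 4 ^ m ≤ 4 * n := by
    rcases Nat.eq_zero_or_pos m with hm0 | hmpos
    · subst hm0; omega
    · obtain ⟨k, rfl⟩ : ∃ k, m = k + 1 := ⟨m - 1, by omega⟩
      have hlt : ((k : ℤ)) < ⌈Real.logb 2 (Real.sqrt n)⌉ := by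
        rw [← hm]; exact_mod_cast Nat.lt_succ_self k
      have hlt' : (k : ℝ) < Real.logb 2 (Real.sqrt n) := by
        exact_mod_cast Int.lt_ceil.mp hlt
      have hpos : (0 : ℝ) < Real.sqrt n := Real.sqrt_pos.mpr (by exact_mod_cast hn)
      have h2 : (2 : ℝ) ^ (k : ℝ) < Real.sqrt n :=
        (Real.lt_logb_iff_rpow_lt (by norm_num) hpos).mp hlt'
      have h2' : (2 : ℝ) ^ k < Real.sqrt n := by
        rwa [Real.rpow_natCast] at h2
      have hsq : ((2 : ℝ) ^ k) ^ 2 < (n : ℝ) := by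
        have := mul_lt_mul'' h2' h2' (by positivity) (by positivity)
        calc ((2:ℝ)^k)^2 = (2:ℝ)^k * (2:ℝ)^k := sq ((2:ℝ)^k)
          _ < Real.sqrt n * Real.sqrt n := this
          _ = (n : ℝ) := Real.mul_self_sqrt (by positivity)
      have h4k : (4 : ℝ) ^ k < (n : ℝ) := by
        have : ((2 : ℝ) ^ k) ^ 2 = (4 : ℝ) ^ k := by
          rw [← pow_mul, mul_comm, pow_mul]; norm_num
        rwa [this] at hsq
      have h4n : (4 : ℕ) ^ k < n := by exact_mod_cast h4k
      have : 4 ^ (k + 1) = 4 * 4 ^ k := by ring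
      omega
  have hsum := stmt6_aux Δ m
  calc ∑ i ∈ Finset.range (m + 1), 2 * 4 ^ (m - i) * Δ * 2 ^ (i + 1) * (2 * i + 4)
      ≤ 48 * Δ * 4 ^ m := by omega
    _ ≤ 48 * Δ * (4 * n) := Nat.mul_le_mul_left _ h4
    _ = 192 * Δ * n := by ring
end
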